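/- Ergosphere/non-trapping condition equivalence: let Λ > 0, m > 0, a ∈ ℝ be such that μ(r) := (r² + a²)(1 − Λr²/3) − 2mr has four distinct real roots r_0 < r_C < r_e < r_c. Then (1 − Λa²/3)³ > 9m²Λ holds if and only if there exists r ∈ (r_e, r_c) with μ(r) > a². -/

import Mathlib

/-!
Writing `α = 1 - Λa²/3`, one has `μ r - a² = r (α r - Λ r³/3 - 2m)`. On `r > 0` the cubic
`α r - Λ r³/3` has its maximum `2αs/3` at `s = √(α/Λ)`, so `μ r > a²` for some `r > 0` exactly
when `αs > 3m`, i.e. when `α³ > 9m²Λ`.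

It remains to locate the positive `r` with `μ r > a²`. Since `μ` has no cubic term, the roots sum
to zero, and `μ = -(Λ/3) ∏ (r - rᵢ)` gives `a² = μ 0 = (Λ/3) (-r₀ r_C) (r_e r_c)`. On `(0, r_C]`
both factors `(r - r₀)(r_C - r)` and `(r_e - r)(r_c - r)` are dominated by their values at `0`
(the first because `r₀ + r_C = -(r_e + r_c)`), and outside `(r₀, r_C) ∪ (r_e, r_c)` we have
`μ ≤ 0`. Conversely `(r_e, r_c) ⊆ (0, ∞)`: a negative root `r` of `μ` has `Λr² > 3`, so if
`r_e ≤ 0` then `r_c ≥ -r₀` would force `μ r_c < 0`.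
-/

open Set

theorem quartic_eq_mul_prod_of_roots {R : Type*} [CommRing R] [IsDomain R]
    {c b d e f x₁ x₂ x₃ x₄ : R} (h₁₂ : x₁ ≠ x₂) (h₁₃ : x₁ ≠ x₃) (h₁₄ : x₁ ≠ x₄)
    (h₂₃ : x₂ ≠ x₃) (h₂₄ : x₂ ≠ x₄) (h₃₄ : x₃ ≠ x₄)
    (p : R → R) (hp : ∀ x, p x = c * x ^ 4 + b * x ^ 3 + d * x ^ 2 + e * x + f)
    (hx₁ : p x₁ = 0) (hx₂ : p x₂ = 0) (hx₃ : p x₃ = 0) (hx₄ : p x₄ = 0) :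
    b = -(c * (x₁ + x₂ + x₃ + x₄)) ∧
      ∀ x, p x = c * ((x - x₁) * (x - x₂) * (x - x₃) * (x - x₄)) := by
  have cancel {x y t : R} (hxy : y ≠ x) (h : (x - y) * t = 0) : t = 0 :=
    (mul_eq_zero.mp h).resolve_left (sub_ne_zero.mpr hxy.symm)
  simp only [hp] at hx₁ hx₂ hx₃ hx₄ ⊢
  -- Newton's divided differences `p[y, x₁]`, `p[z, x₂, x₁]` and `p[x₄, x₃, x₂, x₁]`.
  have first {y : R} (hy : x₁ ≠ y) (h : c * y ^ 4 + b * y ^ 3 + d * y ^ 2 + e * y + f = 0) :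
      c * (y ^ 3 + y ^ 2 * x₁ + y * x₁ ^ 2 + x₁ ^ 3) + b * (y ^ 2 + y * x₁ + x₁ ^ 2)
        + d * (y + x₁) + e = 0 :=
    cancel hy (by linear_combination h - hx₁)
  have second {z : R} (hz : x₂ ≠ z) (h₁z : x₁ ≠ z)
      (h : c * z ^ 4 + b * z ^ 3 + d * z ^ 2 + e * z + f = 0) :
      c * (z ^ 2 + z * x₂ + x₂ ^ 2 + x₁ * z + x₁ * x₂ + x₁ ^ 2) + b * (z + x₂ + x₁) + d = 0 :=
    cancel hz (by linear_combination first h₁z h - first h₁₂ hx₂)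
  have third : c * (x₁ + x₂ + x₃ + x₄) + b = 0 :=
    cancel h₃₄ (by linear_combination second h₂₄ h₁₄ hx₄ - second h₂₃ h₁₃ hx₃)
  refine ⟨by linear_combination third, fun x => ?_⟩
  linear_combination hx₁ + (x - x₁) * first h₁₂ hx₂ + (x - x₁) * (x - x₂) * second h₂₃ h₁₃ hx₃
    + (x - x₁) * (x - x₂) * (x - x₃) * third

theorem three_mul_sq_mul_le_cube_add_two_mul_cube {r s : ℝ} (h : 0 ≤ r + 2 * s) :
    3 * s ^ 2 * r ≤ r ^ 3 + 2 * s ^ 3 := by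
  nlinarith [mul_nonneg (sq_nonneg (r - s)) h]

theorem exists_pos_cubic_pos_iff {α m Λ : ℝ} (hm : 0 ≤ m) (hΛ : 0 < Λ) :
    (∃ r > 0, 0 < α * r - Λ * r ^ 3 / 3 - 2 * m) ↔ 9 * m ^ 2 * Λ < α ^ 3 := by
  have critical (hα : 0 < α) :
      ∃ s > 0, Λ * s ^ 2 = α ∧ (3 * m < α * s ↔ 9 * m ^ 2 * Λ < α ^ 3) := by
    have hαΛ : 0 < α / Λ := div_pos hα hΛ
    refine ⟨√(α / Λ), Real.sqrt_pos.mpr hαΛ, ?_⟩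
    have hs : Λ * √(α / Λ) ^ 2 = α := by rw [Real.sq_sqrt hαΛ.le, mul_div_cancel₀ _ hΛ.ne']
    refine ⟨hs, ?_⟩
    rw [← pow_lt_pow_iff_left₀ (by positivity) (by positivity) two_ne_zero,
      ← mul_lt_mul_iff_of_pos_right hΛ, show (α * √(α / Λ)) ^ 2 * Λ = α ^ 3 by
        linear_combination α ^ 2 * hs]
    ring_nf
  constructor
  · rintro ⟨r, hr, hpos⟩
    have hα : 0 < α := pos_of_mul_pos_left (by nlinarith [pow_pos hr 3]) hr.le
    obtain ⟨s, hs, hsα, hiff⟩ := critical hα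
    have hmax := three_mul_sq_mul_le_cube_add_two_mul_cube (r := r) (s := s) (by linarith)
    refine hiff.mp ?_
    nlinarith [mul_le_mul_of_nonneg_left hmax hΛ.le]
  · intro h
    have hα : 0 < α :=
      (Odd.pow_pos_iff (n := 3) (by decide)).mp ((by positivity : (0 : ℝ) ≤ _).trans_lt h)
    obtain ⟨s, hs, hsα, hiff⟩ := critical hα
    refine ⟨s, hs, ?_⟩
    have := hiff.mpr h
    nlinarith

noncomputable def kdsMu (a m Λ r : ℝ) : ℝ := (r ^ 2 + a ^ 2) * (1 - Λ * r ^ 2 / 3) - 2 * m * r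

section KerrDeSitter

variable {a m Λ r r0 rC re rc : ℝ}

theorem kdsMu_sub_sq :
    kdsMu a m Λ r - a ^ 2 = r * ((1 - Λ * a ^ 2 / 3) * r - Λ * r ^ 3 / 3 - 2 * m) := by
  unfold kdsMu; ring

theorem exists_pos_sq_lt_kdsMu_iff (hm : 0 ≤ m) (hΛ : 0 < Λ) :
    (∃ r > 0, a ^ 2 < kdsMu a m Λ r) ↔ 9 * m ^ 2 * Λ < (1 - Λ * a ^ 2 / 3) ^ 3 := by
  rw [← exists_pos_cubic_pos_iff hm hΛ]
  refine exists_congr fun r => and_congr_right fun hr => ?_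
  rw [← sub_pos, kdsMu_sub_sq, mul_pos_iff_of_pos_left hr]

theorem kdsMu_factorization (hΛ : Λ ≠ 0) (h01 : r0 < rC) (h12 : rC < re) (h23 : re < rc)
    (hroot0 : kdsMu a m Λ r0 = 0) (hrootC : kdsMu a m Λ rC = 0) (hroote : kdsMu a m Λ re = 0)
    (hrootc : kdsMu a m Λ rc = 0) :
    r0 + rC + re + rc = 0 ∧
      ∀ r, kdsMu a m Λ r = -(Λ / 3) * ((r - r0) * (r - rC) * (r - re) * (r - rc)) := by
  obtain ⟨hcubic, hfac⟩ := quartic_eq_mul_prod_of_roots (c := -(Λ / 3)) (b := 0)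
    (d := 1 - Λ * a ^ 2 / 3) (e := -2 * m) (f := a ^ 2) h01.ne (h01.trans h12).ne
    (h01.trans (h12.trans h23)).ne h12.ne (h12.trans h23).ne h23.ne (kdsMu a m Λ)
    (fun r => by unfold kdsMu; ring) hroot0 hrootC hroote hrootc
  refine ⟨?_, hfac⟩
  have : Λ / 3 * (r0 + rC + re + rc) = 0 := by linear_combination -hcubic
  exact (mul_eq_zero.mp this).resolve_left (by positivity)

theorem kds_three_lt_of_root_of_neg (hm : 0 < m) (hr : r < 0) (hroot : kdsMu a m Λ r = 0) :
    3 < Λ * r ^ 2 := by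
  by_contra! h
  have : 0 ≤ (r ^ 2 + a ^ 2) * (1 - Λ * r ^ 2 / 3) := mul_nonneg (by positivity) (by linarith)
  unfold kdsMu at hroot
  nlinarith [mul_pos hm (neg_pos.mpr hr)]

theorem kdsMu_neg_of_three_le (hm : 0 < m) (hr : 0 < r) (h : 3 ≤ Λ * r ^ 2) :
    kdsMu a m Λ r < 0 := by
  have : (r ^ 2 + a ^ 2) * (1 - Λ * r ^ 2 / 3) ≤ 0 :=
    mul_nonpos_of_nonneg_of_nonpos (by positivity) (by linarith)
  unfold kdsMu
  nlinarith [mul_pos hm hr]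

theorem kds_zero_lt_re (hm : 0 < m) (h01 : r0 < rC) (h12 : rC < re)
    (hsum : r0 + rC + re + rc = 0) (hroot0 : kdsMu a m Λ r0 = 0)
    (hrootc : kdsMu a m Λ rc = 0) : 0 < re := by
  by_contra! hre
  have hr0 : r0 < 0 := by linarith
  have hrc : -r0 ≤ rc := by linarith
  have h0 := kds_three_lt_of_root_of_neg hm hr0 hroot0
  have hΛ : 0 < Λ := pos_of_mul_pos_left (by linarith) (sq_nonneg r0)
  have : Λ * r0 ^ 2 ≤ Λ * rc ^ 2 := mul_le_mul_of_nonneg_left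
    (by simpa using pow_le_pow_left₀ (neg_nonneg.mpr hr0.le) hrc 2) hΛ.le
  exact (kdsMu_neg_of_three_le hm (by linarith) (by linarith)).ne hrootc

theorem kdsMu_le_sq_of_pos_of_le_rC (hΛ : 0 ≤ Λ) (h12 : rC < re) (h23 : re < rc)
    (hsum : r0 + rC + re + rc = 0)
    (hfac : ∀ r, kdsMu a m Λ r = -(Λ / 3) * ((r - r0) * (r - rC) * (r - re) * (r - rc)))
    (hr : 0 < r) (hrC : r ≤ rC) : kdsMu a m Λ r ≤ a ^ 2 := by
  have ha : a ^ 2 = Λ / 3 * ((-r0 * rC) * (re * rc)) := by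
    have := hfac 0
    unfold kdsMu at this
    linear_combination this
  have hinner : (r - r0) * (rC - r) ≤ -r0 * rC := by nlinarith
  have houter : (re - r) * (rc - r) ≤ re * rc := by nlinarith
  have hprod := mul_le_mul hinner houter (mul_nonneg (by linarith) (by linarith))
    ((mul_nonneg (by linarith) (by linarith)).trans hinner)
  rw [hfac, ha]
  nlinarith [mul_le_mul_of_nonneg_left hprod (by positivity : 0 ≤ Λ / 3)]

theorem mem_Ioo_of_sq_lt_kdsMu (hΛ : 0 ≤ Λ) (h01 : r0 < rC) (h12 : rC < re) (h23 : re < rc)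
    (hsum : r0 + rC + re + rc = 0)
    (hfac : ∀ r, kdsMu a m Λ r = -(Λ / 3) * ((r - r0) * (r - rC) * (r - re) * (r - rc)))
    (hr : 0 < r) (h : a ^ 2 < kdsMu a m Λ r) : r ∈ Ioo re rc := by
  have hrC : rC < r := by
    by_contra! hrC
    exact (kdsMu_le_sq_of_pos_of_le_rC hΛ h12 h23 hsum hfac hr hrC).not_gt h
  have nonpos (hprod : 0 ≤ (r - r0) * (r - rC) * ((r - re) * (r - rc))) : False := by
    rw [hfac] at h
    nlinarith [mul_nonneg (by positivity : 0 ≤ Λ / 3) hprod]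
  constructor
  · by_contra! hre
    exact nonpos (mul_nonneg (mul_nonneg (by linarith) (by linarith))
      (mul_nonneg_of_nonpos_of_nonpos (by linarith) (by linarith)))
  · by_contra! hrc
    exact nonpos (mul_nonneg (mul_nonneg (by linarith) (by linarith))
      (mul_nonneg (by linarith) (by linarith)))

end KerrDeSitter

theorem kds_ergosphere_condition_iff (a m Λ r0 rC re rc : ℝ) (hm : 0 < m) (hΛ : 0 < Λ)
    (h01 : r0 < rC) (h12 : rC < re) (h23 : re < rc)
    (μ : ℝ → ℝ) (hμ : ∀ r, μ r = (r ^ 2 + a ^ 2) * (1 - Λ * r ^ 2 / 3) - 2 * m * r)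
    (hroot0 : μ r0 = 0) (hrootC : μ rC = 0) (hroote : μ re = 0) (hrootc : μ rc = 0) :
    (1 - Λ * a ^ 2 / 3) ^ 3 > 9 * m ^ 2 * Λ ↔ ∃ r ∈ Ioo re rc, a ^ 2 < μ r := by
  obtain rfl : μ = kdsMu a m Λ := funext hμ
  obtain ⟨hsum, hfac⟩ := kdsMu_factorization hΛ.ne' h01 h12 h23 hroot0 hrootC hroote hrootc
  have hre := kds_zero_lt_re hm h01 h12 hsum hroot0 hrootc
  rw [gt_iff_lt, ← exists_pos_sq_lt_kdsMu_iff hm.le hΛ]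
  exact ⟨fun ⟨r, hr, h⟩ => ⟨r, mem_Ioo_of_sq_lt_kdsMu hΛ.le h01 h12 h23 hsum hfac hr h, h⟩,
    fun ⟨r, hr, h⟩ => ⟨r, hre.trans hr.1, h⟩⟩
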